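/- arXiv:1407.6548 — 6 statements merged into one kernel-verified Lean document; each statement's English description precedes it below -/
import Mathlib

section
/- Let v ≥ 1 and m ≥ 2 be integers and γ ∈ ℤ. Define w_1 = (γ+1)v − γ if v is odd, and w_1 = ((γ+1)v − γ)(v − γ) if v is even. Suppose w_1 = s²·v_1 for some positive integer s and squarefree positive integer v_1, and suppose there is a prime p dividing v_1 that is self-conjugate modulo m. Then there exists no near Butson–Hadamard matrix BH_γ(v,m). -/
open Matrix

/-- `H` is a near Butson–Hadamard matrix `BH_γ(v, m)`: all entries are complex `m`-th
roots of unity and `H * Hᴴ = (v - γ) • I + γ • J`. -/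
def IsBH (v m : ℕ) (γ : ℂ) (H : Matrix (Fin v) (Fin v) ℂ) : Prop :=
  (∀ i j, H i j ^ m = 1) ∧
    H * H.conjTranspose =
      ((v : ℂ) - γ) • (1 : Matrix (Fin v) (Fin v) ℂ) + γ • Matrix.of (fun _ _ => (1 : ℂ))

/-- A prime `p` coprime to `m` is self-conjugate modulo `m` if its multiplicative order
`f` modulo `m` is even and `p ^ (f / 2) ≡ -1 (mod m)`. -/
def SelfConjugate (p m : ℕ) : Prop :=
  Nat.Coprime p m ∧ Even (orderOf (p : ZMod m)) ∧
    (p : ZMod m) ^ (orderOf (p : ZMod m) / 2) = -1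

open Polynomial ComplexConjugate

/-!
The determinant `d = det H` is an element of `ℤ[ζ_m]`, and `H Hᴴ = (v - γ) I + γ J` gives
`d d̄ = (v - γ)^(v-1) ((γ+1) v - γ)`, a square times `w₁`. As `w₁ = s² v₁` has odd `p`-adic
valuation it is not a square, which excludes `v = γ`, and so `v_p(d d̄)` is odd as well.

For `p` self-conjugate modulo `m`, complex conjugation acts on `ℤ[ζ_m]` as the Frobenius power
`ζ ↦ ζ^(p^e)`, so `ᾱ ≡ α^(p^e) (mod p)`. Hence `p ∣ α ᾱ` implies `p ∣ α^(p^e+1)`, and then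
`p ∣ α` since `ℤ[ζ_m]/p ≅ 𝔽_p[X]/(Φ_m)` is reduced (`Φ_m` is squarefree modulo `p ∤ m`).
Dividing `α` by `p` lowers `v_p(α ᾱ)` by two, so `v_p(α ᾱ)` is always even.
-/

theorem Polynomial.map_zmod_eq_zero_iff_C_dvd (p : ℕ) (f : ℤ[X]) :
    f.map (Int.castRingHom (ZMod p)) = 0 ↔ C (p : ℤ) ∣ f := by
  rw [C_dvd_iff_dvd_coeff]
  simp only [Polynomial.ext_iff, coeff_map, coeff_zero, eq_intCast,
    ZMod.intCast_zmod_eq_zero_iff_dvd]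

theorem Polynomial.exists_pow_prime_pow_eq_expand_add (p : ℕ) [Fact p.Prime] (e : ℕ) (f : ℤ[X]) :
    ∃ h : ℤ[X], f ^ p ^ e = expand ℤ (p ^ e) f + C (p : ℤ) * h := by
  have hfrob : iterateFrobenius (ZMod p) p e = RingHom.id (ZMod p) :=
    RingHom.ext fun x => by rw [iterateFrobenius_def, ZMod.pow_card_pow, RingHom.id_apply]
  have hmap : (f ^ p ^ e - expand ℤ (p ^ e) f).map (Int.castRingHom (ZMod p)) = 0 := by
    rw [Polynomial.map_sub, Polynomial.map_pow, map_expand, sub_eq_zero,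
      ← map_iterateFrobenius_expand p, hfrob, Polynomial.map_id]
  obtain ⟨h, hh⟩ := (map_zmod_eq_zero_iff_C_dvd p _).mp hmap
  exact ⟨h, by linear_combination hh⟩

section Cyclotomic

variable {K : Type*} [Field K] [CharZero K] {m : ℕ} {ζ : K} {p : ℕ} [Fact p.Prime]

theorem IsPrimitiveRoot.exists_aeval_eq_mul_of_pow_eq_mul (hζ : IsPrimitiveRoot ζ m)
    (hm : m ≠ 0) (hpm : ¬p ∣ m) {N : ℕ} (hN : N ≠ 0) {f g : ℤ[X]}
    (hfg : aeval ζ f ^ N = p * aeval ζ g) : ∃ r : ℤ[X], aeval ζ f = p * aeval ζ r := by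
  have hΦ : cyclotomic m ℤ = minpoly ℤ ζ := cyclotomic_eq_minpoly hζ (Nat.pos_of_ne_zero hm)
  have hdvd : cyclotomic m ℤ ∣ f ^ N - C (p : ℤ) * g := by
    rw [hΦ]
    refine minpoly.isIntegrallyClosed_dvd (hζ.isIntegral (Nat.pos_of_ne_zero hm)) ?_
    simp [hfg]
  have : NeZero (m : ZMod p) := ⟨by rwa [Ne, ZMod.natCast_eq_zero_iff]⟩
  have hsq : Squarefree ((cyclotomic m ℤ).map (Int.castRingHom (ZMod p))) := by
    rw [map_cyclotomic_int]; exact squarefree_cyclotomic m (ZMod p)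
  obtain ⟨q, hq⟩ : (cyclotomic m ℤ).map (Int.castRingHom (ZMod p)) ∣
      f.map (Int.castRingHom (ZMod p)) := by
    refine (hsq.dvd_pow_iff_dvd hN).mp ?_
    simpa [Polynomial.map_sub, Polynomial.map_pow] using
      Polynomial.map_dvd (Int.castRingHom (ZMod p)) hdvd
  obtain ⟨q, rfl⟩ := map_surjective (Int.castRingHom (ZMod p)) ZMod.intCast_surjective q
  obtain ⟨r, hr⟩ := (map_zmod_eq_zero_iff_C_dvd p (f - cyclotomic m ℤ * q)).mp
    (by rw [Polynomial.map_sub, Polynomial.map_mul, hq, sub_self])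
  refine ⟨r, ?_⟩
  have hζ0 : aeval ζ (cyclotomic m ℤ) = 0 := by rw [hΦ]; exact minpoly.aeval ℤ ζ
  have := congrArg (aeval ζ) hr
  simp only [map_sub, map_mul, hζ0, aeval_C] at this
  simpa [sub_eq_iff_eq_add] using this

theorem IsPrimitiveRoot.exists_aeval_eq_mul_of_mul_map_eq_mul (hζ : IsPrimitiveRoot ζ m)
    (hm : m ≠ 0) (hpm : ¬p ∣ m) {σ : K →+* K} {e : ℕ} (hσ : σ ζ = ζ ^ p ^ e) {f g : ℤ[X]}
    (hfg : aeval ζ f * σ (aeval ζ f) = p * aeval ζ g) :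
    ∃ r : ℤ[X], aeval ζ f = p * aeval ζ r := by
  obtain ⟨h, hh⟩ := exists_pow_prime_pow_eq_expand_add p e f
  have hσf : σ (aeval ζ f) = aeval ζ f ^ p ^ e - p * aeval ζ h := by
    have := congrArg (aeval ζ) hh
    simp only [map_pow, map_add, map_mul, map_natCast, expand_aeval] at this
    rw [← σ.toIntAlgHom_apply, ← aeval_algHom_apply, σ.toIntAlgHom_coe, hσ, this]
    ring
  refine hζ.exists_aeval_eq_mul_of_pow_eq_mul hm hpm (N := p ^ e + 1) (g := g + f * h)
    (by positivity) ?_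
  rw [hσf] at hfg
  simp only [map_add, map_mul]
  linear_combination hfg

end Cyclotomic

theorem Int.dvd_of_isIntegral_of_mul_eq {K : Type*} [Field K] [CharZero K] {z : K}
    (hz : IsIntegral ℤ z) {d n : ℤ} (hd : d ≠ 0) (h : d * z = n) : d ∣ n := by
  have hq : algebraMap ℚ K (n / d) = z := by
    rw [map_div₀, map_intCast, map_intCast, ← h, mul_div_cancel_left₀ _ (Int.cast_ne_zero.mpr hd)]
  rw [← hq, ← (algebraMap ℚ K).toIntAlgHom_coe,
    isIntegral_algHom_iff _ (algebraMap ℚ K).injective] at hz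
  obtain ⟨c, hc⟩ := IsIntegrallyClosed.isIntegral_iff.mp hz
  refine ⟨c, ?_⟩
  rw [algebraMap_int_eq, eq_intCast, eq_div_iff (Int.cast_ne_zero.mpr hd)] at hc
  exact_mod_cast hc.symm.trans (mul_comm _ _)

theorem IsPrimitiveRoot.conj_eq_pow {ζ : ℂ} {m n : ℕ} (hζ : IsPrimitiveRoot ζ m) (hm : m ≠ 0)
    (hmn : m ∣ n + 1) : conj ζ = ζ ^ n := by
  rw [← Complex.inv_eq_conj (hζ.norm'_eq_one hm), inv_eq_of_mul_eq_one_right]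
  rwa [← pow_succ', hζ.pow_eq_one_iff_dvd]

theorem IsPrimitiveRoot.isIntegral_aeval_mul_conj {ζ : ℂ} {m : ℕ} (hζ : IsPrimitiveRoot ζ m)
    (hm : m ≠ 0) (f : ℤ[X]) : IsIntegral ℤ (aeval ζ f * conj (aeval ζ f)) := by
  have hf : IsIntegral ℤ (aeval ζ f) :=
    adjoin_le_integralClosure (hζ.isIntegral (Nat.pos_of_ne_zero hm))
      (aeval_mem_adjoin_singleton ℤ ζ)
  exact hf.mul (hf.map (starRingEnd ℂ).toIntAlgHom)

theorem SelfConjugate.exists_dvd_pow_add_one {p m : ℕ} (h : SelfConjugate p m) :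
    ∃ e, m ∣ p ^ e + 1 := by
  refine ⟨orderOf (p : ZMod m) / 2, (ZMod.natCast_eq_zero_iff _ _).mp ?_⟩
  push_cast
  rw [h.2.2, neg_add_cancel]

theorem odd_padicValNat_sq_mul_of_squarefree {p : ℕ} [Fact p.Prime] {s v : ℕ} (hs : s ≠ 0)
    (hv : Squarefree v) (hpv : p ∣ v) : Odd (padicValNat p (s ^ 2 * v)) := by
  have hp : p.Prime := Fact.out
  have hpv1 : padicValNat p v = 1 := by
    have := (Nat.squarefree_iff_factorization_le_one hv.ne_zero).mp hv p
    rw [Nat.factorization_def v hp] at this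
    have := one_le_padicValNat_of_dvd hv.ne_zero hpv
    omega
  rw [padicValNat.mul (pow_ne_zero 2 hs) hv.ne_zero, padicValNat.pow, hpv1]
  exact odd_two_mul_add_one _

theorem not_isSquare_of_odd_padicValInt {p : ℕ} [Fact p.Prime] {n : ℤ}
    (h : Odd (padicValInt p n)) : ¬IsSquare n := by
  rintro ⟨x, rfl⟩
  rcases eq_or_ne x 0 with rfl | hx
  · simp at h
  rw [padicValInt.mul hx hx, ← Nat.not_even_iff_odd] at h
  exact h ⟨_, rfl⟩

theorem odd_padicValInt_sq_mul {p : ℕ} [Fact p.Prime] {x n : ℤ} (hx : x ≠ 0)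
    (h : Odd (padicValInt p n)) : Odd (padicValInt p (x ^ 2 * n)) := by
  have hn : n ≠ 0 := by rintro rfl; simp at h
  rw [padicValInt.mul (pow_ne_zero 2 hx) hn, sq, padicValInt.mul hx hx]
  exact Even.add_odd ⟨_, rfl⟩ h

theorem pow_pred_mul_eq_sq_mul_ite {M : Type*} [CommMonoid M] {v : ℕ} (hv : 1 ≤ v) (x y : M) :
    x ^ (v - 1) * y = (x ^ ((v - 1) / 2)) ^ 2 * if Odd v then y else y * x := by
  split_ifs with h
  · obtain ⟨k, rfl⟩ := h
    rw [← pow_mul]; congr 2; omega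
  · obtain ⟨k, rfl⟩ := Nat.not_odd_iff_even.mp h
    obtain ⟨j, rfl⟩ : ∃ j, k = j + 1 := ⟨k - 1, by omega⟩
    rw [← pow_mul, show j + 1 + (j + 1) - 1 = j * 2 + 1 by omega,
      show (j * 2 + 1) / 2 * 2 = j * 2 by omega, pow_succ, mul_right_comm, mul_assoc]

theorem padicValInt_prime_sq_mul (p : ℕ) [Fact p.Prime] {n : ℤ} (hn : n ≠ 0) :
    padicValInt p (p ^ 2 * n) = padicValInt p n + 2 := by
  have hp : (p : ℤ) ^ 2 ≠ 0 := pow_ne_zero 2 (Nat.cast_ne_zero.mpr (Fact.out : p.Prime).ne_zero)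
  rw [padicValInt.mul hp hn, ← Nat.cast_pow, padicValInt.of_nat, padicValNat.prime_pow, add_comm]

theorem IsPrimitiveRoot.even_padicValInt_of_aeval_mul_conj_eq {ζ : ℂ} {m p e : ℕ} [Fact p.Prime]
    (hζ : IsPrimitiveRoot ζ m) (hm : m ≠ 0) (hpm : ¬p ∣ m) (hme : m ∣ p ^ e + 1) {f : ℤ[X]}
    {n : ℤ} (h : aeval ζ f * conj (aeval ζ f) = n) : Even (padicValInt p n) := by
  induction hk : padicValInt p n using Nat.strong_induction_on generalizing f n with
  | _ k ih =>
  by_cases hpn : (p : ℤ) ∣ n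
  swap
  · rw [← hk, padicValInt.eq_zero_of_not_dvd hpn]; exact ⟨0, rfl⟩
  rcases eq_or_ne n 0 with rfl | hn
  · rw [← hk, padicValInt.zero]; exact ⟨0, rfl⟩
  have hp0 : (p : ℂ) ≠ 0 := Nat.cast_ne_zero.mpr (Fact.out : p.Prime).ne_zero
  obtain ⟨c, rfl⟩ := hpn
  obtain ⟨r, hr⟩ := hζ.exists_aeval_eq_mul_of_mul_map_eq_mul hm hpm (hζ.conj_eq_pow hm hme)
    (g := C c) (by rw [h]; simp)
  have hrc : (p : ℂ) * (aeval ζ r * conj (aeval ζ r)) = c := by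
    apply mul_left_cancel₀ hp0
    rw [hr, map_mul, Complex.conj_natCast] at h
    push_cast at h
    linear_combination h
  -- `(α / p)(α / p)‾ = α ᾱ / p ^ 2` is a rational algebraic integer, so `p ^ 2 ∣ α ᾱ`
  obtain ⟨n', rfl⟩ := Int.dvd_of_isIntegral_of_mul_eq (hζ.isIntegral_aeval_mul_conj hm r)
    (Nat.cast_ne_zero.mpr (Fact.out : p.Prime).ne_zero) hrc
  have hr' : aeval ζ r * conj (aeval ζ r) = n' := by
    apply mul_left_cancel₀ hp0
    push_cast at hrc
    exact hrc
  have hval : padicValInt p (p * (p * n')) = padicValInt p n' + 2 := by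
    rw [← mul_assoc, ← sq, padicValInt_prime_sq_mul p (by rintro rfl; simp at hn)]
  rw [← hk, hval]
  exact (ih _ (by omega) hr' rfl).add even_two

theorem Matrix.det_smul_one_add_smul_of_one {n K : Type*} [Fintype n] [DecidableEq n]
    [Nonempty n] [Field K] {a : K} (ha : a ≠ 0) (b : K) :
    det (a • (1 : Matrix n n K) + b • of fun _ _ => 1) =
      a ^ (Fintype.card n - 1) * (a + Fintype.card n * b) := by
  have hJ : a • (1 : Matrix n n K) + b • of (fun _ _ => 1) =
      a • (1 + replicateCol (Fin 1) (fun _ : n => a⁻¹ * b) *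
        replicateRow (Fin 1) (fun _ : n => (1 : K))) := by
    ext i j
    simp [Matrix.mul_apply, mul_add, mul_inv_cancel_left₀ ha]
  rw [hJ, det_smul, det_one_add_mul_comm, det_unique]
  simp only [add_apply, one_apply_eq, mul_apply, replicateRow_apply, replicateCol_apply, one_mul,
    Finset.sum_const, Finset.card_univ, nsmul_eq_mul]
  rw [← pow_sub_one_mul Fintype.card_ne_zero a]
  field_simp

theorem IsBH.det_mul_conj_det {v m : ℕ} {γ : ℂ} {H : Matrix (Fin v) (Fin v) ℂ} (hH : IsBH v m γ H)
    (hv : 1 ≤ v) (hvγ : (v : ℂ) ≠ γ) :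
    H.det * conj H.det = (v - γ) ^ (v - 1) * ((γ + 1) * v - γ) := by
  have : NeZero v := ⟨by omega⟩
  have := congrArg Matrix.det hH.2
  rw [Matrix.det_mul, Matrix.det_conjTranspose, Matrix.det_smul_one_add_smul_of_one
    (sub_ne_zero.mpr hvγ), Fintype.card_fin] at this
  change H.det * star H.det = _
  rw [this]
  ring

theorem IsBH.exists_aeval_eq_det {v m : ℕ} [NeZero m] {γ : ℂ} {H : Matrix (Fin v) (Fin v) ℂ}
    {ζ : ℂ} (hH : IsBH v m γ H) (hζ : IsPrimitiveRoot ζ m) :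
    ∃ f : ℤ[X], aeval ζ f = H.det := by
  choose k _ hk using fun i j => hζ.eq_pow_of_pow_eq_one (hH.1 i j)
  refine ⟨Matrix.det (of fun i j => X ^ k i j), ?_⟩
  rw [← AlgHom.coe_toRingHom, RingHom.map_det]
  congr 1
  ext i j
  simp [hk]

theorem stmt_6_general (v m : ℕ) (hv : 1 ≤ v) (hm : 2 ≤ m) (γ : ℤ) (w1 : ℤ)
    (hw1 : w1 = if Odd v then (γ + 1) * v - γ else ((γ + 1) * v - γ) * ((v : ℤ) - γ))
    (s v1 : ℕ) (hs : 0 < s) (hsf : Squarefree v1)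
    (hfac : w1 = (s : ℤ) ^ 2 * v1)
    (p : ℕ) (hp : p.Prime) (hpv1 : p ∣ v1) (hsc : SelfConjugate p m) :
    ¬∃ H : Matrix (Fin v) (Fin v) ℂ, IsBH v m (γ : ℂ) H := by
  rintro ⟨H, hH⟩
  have : Fact p.Prime := ⟨hp⟩
  have : NeZero m := ⟨by omega⟩
  have hw1_odd : Odd (padicValInt p w1) := by
    rw [hfac, ← Nat.cast_pow, ← Nat.cast_mul, padicValInt.of_nat]
    exact odd_padicValNat_sq_mul_of_squarefree hs.ne' hsf hpv1
  have hvγ : (v : ℤ) ≠ γ := by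
    rintro rfl
    refine not_isSquare_of_odd_padicValInt hw1_odd ?_
    rw [hw1]
    split_ifs
    exacts [⟨v, by ring⟩, ⟨0, by ring⟩]
  obtain ⟨e, hme⟩ := hsc.exists_dvd_pow_add_one
  have hζ := Complex.isPrimitiveRoot_exp m (NeZero.ne m)
  obtain ⟨f, hf⟩ := hH.exists_aeval_eq_det hζ
  have hnorm : H.det * conj H.det = (((v - γ) ^ (v - 1) * ((γ + 1) * v - γ) : ℤ) : ℂ) := by
    rw [hH.det_mul_conj_det hv (by exact_mod_cast hvγ)]
    push_cast
    ring
  rw [← hf, pow_pred_mul_eq_sq_mul_ite hv, ← hw1] at hnorm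
  have hodd := odd_padicValInt_sq_mul (pow_ne_zero ((v - 1) / 2) (sub_ne_zero.mpr hvγ)) hw1_odd
  exact Nat.not_even_iff_odd.mpr hodd (hζ.even_padicValInt_of_aeval_mul_conj_eq (NeZero.ne m)
    (hp.coprime_iff_not_dvd.mp hsc.1) hme hnorm)

/-- Brock's criterion for near Butson–Hadamard matrices: with
`w₁ = (γ+1)v - γ` for odd `v` and `w₁ = ((γ+1)v - γ)(v - γ)` for even `v`, if the
squarefree part `v₁` of `w₁` has a prime divisor that is self-conjugate modulo `m`,
then no `BH_γ(v, m)` exists. -/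
theorem stmt_6 (v m : ℕ) (hv : 1 ≤ v) (hm : 2 ≤ m) (γ : ℤ) (w1 : ℤ)
    (hw1 : w1 = if Odd v then (γ + 1) * v - γ else ((γ + 1) * v - γ) * ((v : ℤ) - γ))
    (s v1 : ℕ) (hs : 0 < s) (hv1 : 0 < v1) (hsf : Squarefree v1)
    (hfac : w1 = (s : ℤ) ^ 2 * v1)
    (p : ℕ) (hp : p.Prime) (hpv1 : p ∣ v1) (hsc : SelfConjugate p m) :
    ¬∃ H : Matrix (Fin v) (Fin v) ℂ, IsBH v m (γ : ℂ) H :=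
  stmt_6_general v m hv hm γ w1 hw1 s v1 hs hsf hfac p hp hpv1 hsc
end

section
/- Let m ≥ 2 and v ≥ 3 be integers and let γ ∈ ℤ with γ ≤ −2. Then there exists no near Butson–Hadamard matrix BH_γ(v,m) and no near conference matrix C_γ(v,m). -/
open Matrix

/-- `C` is a near conference matrix `C_γ(v, m)`: the diagonal entries vanish, all
off-diagonal entries are complex `m`-th roots of unity, and
`C * Cᴴ = (v - 1 - γ) • I + γ • J`. -/
def IsNearConf (v m : ℕ) (γ : ℂ) (C : Matrix (Fin v) (Fin v) ℂ) : Prop :=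
  (∀ i, C i i = 0) ∧ (∀ i j, i ≠ j → C i j ^ m = 1) ∧
    C * C.conjTranspose =
      ((v : ℂ) - 1 - γ) • (1 : Matrix (Fin v) (Fin v) ℂ) + γ • Matrix.of (fun _ _ => (1 : ℂ))

/-- The sum of all entries of a Gram matrix `H * Hᴴ` has nonnegative real part. -/
lemma gram_sum_nonneg {v : ℕ} (H : Matrix (Fin v) (Fin v) ℂ) :
    0 ≤ (∑ i, ∑ j, (H * H.conjTranspose) i j).re := by
  have h2 : ∑ i, ∑ j, (H * H.conjTranspose) i j
      = ∑ k, (∑ i, H i k) * (starRingEnd ℂ) (∑ j, H j k) := by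
    simp only [Matrix.mul_apply, Matrix.conjTranspose_apply, map_sum, Finset.sum_mul_sum]
    have h3 : ∀ i : Fin v, ∑ j : Fin v, ∑ k : Fin v, H i k * star (H j k)
        = ∑ k : Fin v, ∑ j : Fin v, H i k * star (H j k) := fun i => Finset.sum_comm
    simp only [h3]
    exact Finset.sum_comm
  rw [h2]
  simp only [Complex.mul_conj]
  rw [Complex.re_sum]
  apply Finset.sum_nonneg
  intro k _
  simp [Complex.normSq_nonneg]

/-- The sum of all entries of `a • I + b • J` is `a v + b v²`. -/
lemma rhs_sum (v : ℕ) (a b : ℂ) (M : Matrix (Fin v) (Fin v) ℂ)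
    (hM : M = a • (1 : Matrix (Fin v) (Fin v) ℂ) + b • Matrix.of (fun _ _ => (1 : ℂ))) :
    ∑ i, ∑ j, M i j = a * v + b * v ^ 2 := by
  subst hM
  simp only [Matrix.add_apply, Matrix.smul_apply, Matrix.of_apply, Matrix.one_apply,
    smul_eq_mul, mul_one, mul_ite, mul_zero, Finset.sum_add_distrib, Finset.sum_ite_eq,
    Finset.mem_univ, if_true, Finset.sum_const, Finset.card_univ, Fintype.card_fin,
    nsmul_eq_mul]
  ring

/-- For an integer `γ ≤ -2` there is neither a `BH_γ(v, m)` nor a `C_γ(v, m)`. -/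
theorem stmt_8 (m v : ℕ) (hm : 2 ≤ m) (hv : 3 ≤ v) (γ : ℤ) (hγ : γ ≤ -2) :
    (¬∃ H : Matrix (Fin v) (Fin v) ℂ, IsBH v m (γ : ℂ) H) ∧
      (¬∃ C : Matrix (Fin v) (Fin v) ℂ, IsNearConf v m (γ : ℂ) C) := by
  have hvr : (3 : ℝ) ≤ (v : ℝ) := by exact_mod_cast hv
  have hγr : (γ : ℝ) ≤ -2 := by exact_mod_cast hγ
  constructor
  · rintro ⟨H, _, hH⟩
    have h1 := gram_sum_nonneg H
    rw [rhs_sum v ((v : ℂ) - γ) (γ : ℂ) _ hH] at h1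
    have h2 : ((v : ℂ) - (γ : ℂ)) * v + (γ : ℂ) * v ^ 2
        = (((v : ℝ) ^ 2 + (γ : ℝ) * ((v : ℝ) * ((v : ℝ) - 1)) : ℝ) : ℂ) := by
      push_cast; ring
    rw [h2, Complex.ofReal_re] at h1
    have hvv : (0:ℝ) ≤ (v:ℝ) * ((v:ℝ) - 1) := by nlinarith
    nlinarith [mul_le_mul_of_nonneg_right hγr hvv]
  · rintro ⟨C, _, _, hC⟩
    have h1 := gram_sum_nonneg C
    rw [rhs_sum v ((v : ℂ) - 1 - γ) (γ : ℂ) _ hC] at h1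
    have h2 : ((v : ℂ) - 1 - (γ : ℂ)) * v + (γ : ℂ) * v ^ 2
        = (((v : ℝ) * ((v : ℝ) - 1) * (1 + (γ : ℝ)) : ℝ) : ℂ) := by
      push_cast; ring
    rw [h2, Complex.ofReal_re] at h1
    have hvv : (0:ℝ) ≤ (v:ℝ) * ((v:ℝ) - 1) := by nlinarith
    nlinarith [mul_le_mul_of_nonneg_left (show (1:ℝ) + (γ:ℝ) ≤ -1 by linarith) hvv]
end

section
/- Let q be a prime with q ≡ 3 (mod 4), let r ≥ 1 be an integer, and let m = q^r or m = 2q^r. Let p be a prime with gcd(p,m) = 1. If p is a quadratic non-residue modulo q, then p is self-conjugate modulo m. -/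
lemma sq_one_aux (q r : ℕ) (hq : q.Prime) (hq2 : q ≠ 2) (m : ℕ)
    (hm : m = q ^ r ∨ m = 2 * q ^ r) (x : ZMod m) (hx : x ^ 2 = 1) :
    x = 1 ∨ x = -1 := by
  have hm0 : m ≠ 0 := by
    have := hq.pos
    rcases hm with rfl | rfl
    · exact pow_ne_zero _ (by omega)
    · exact Nat.mul_ne_zero two_ne_zero (pow_ne_zero _ (by omega))
  haveI : NeZero m := ⟨hm0⟩
  set a : ℤ := (x.val : ℤ) with ha
  have hax : ((a : ℤ) : ZMod m) = x := by
    rw [ha]; push_cast; exact ZMod.natCast_rightInverse x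
  have hdvd : (m : ℤ) ∣ a ^ 2 - 1 := by
    rw [← ZMod.intCast_zmod_eq_zero_iff_dvd]
    push_cast
    rw [hax, hx]; ring
  have hfac : a ^ 2 - 1 = (a - 1) * (a + 1) := by ring
  have hqZ : Prime (q : ℤ) := Nat.prime_iff_prime_int.mp hq
  have hqrm : (q : ℤ) ^ r ∣ (a - 1) * (a + 1) := by
    rw [← hfac]
    refine dvd_trans ?_ hdvd
    rcases hm with rfl | rfl <;> push_cast
    · rfl
    · exact ⟨2, by ring⟩
  have hnotboth : ¬ ((q : ℤ) ∣ a - 1 ∧ (q : ℤ) ∣ a + 1) := by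
    rintro ⟨h1, h2⟩
    have : (q : ℤ) ∣ 2 := by
      have := dvd_sub h2 h1
      simpa using this
    have h2 : q ∣ 2 := by exact_mod_cast this
    exact hq2 ((Nat.prime_dvd_prime_iff_eq hq Nat.prime_two).mp h2)
  have key : (q : ℤ) ^ r ∣ a - 1 ∨ (q : ℤ) ^ r ∣ a + 1 := by
    by_cases h1 : (q : ℤ) ∣ a + 1
    · have h2 : ¬ (q : ℤ) ∣ a - 1 := fun h => hnotboth ⟨h, h1⟩
      right
      exact (((hqZ.coprime_iff_not_dvd).mpr h2).pow_left).dvd_of_dvd_mul_left hqrm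
    · left
      exact (((hqZ.coprime_iff_not_dvd).mpr h1).pow_left).dvd_of_dvd_mul_right hqrm
  have conclude : (m : ℤ) ∣ a - 1 ∨ (m : ℤ) ∣ a + 1 := by
    rcases hm with rfl | rfl
    · rcases key with h | h
      · left; exact_mod_cast h
      · right; exact_mod_cast h
    · have h2m : (2 : ℤ) ∣ a ^ 2 - 1 := dvd_trans (by push_cast; exact Dvd.intro _ rfl) hdvd
      have haodd : (2 : ℤ) ∣ a - 1 ∧ (2 : ℤ) ∣ a + 1 := by
        rw [hfac] at h2m
        rcases (Int.prime_two.dvd_mul.mp h2m) with h | h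
        · exact ⟨h, by omega⟩
        · exact ⟨by omega, h⟩
      have hcop : IsCoprime (2 : ℤ) ((q : ℤ) ^ r) := by
        refine (Int.prime_two.coprime_iff_not_dvd.mpr ?_).pow_right
        intro h
        have : (2 : ℕ) ∣ q := by exact_mod_cast h
        exact hq2 ((Nat.prime_dvd_prime_iff_eq Nat.prime_two hq).mp this).symm
      rcases key with h | h
      · left; push_cast; exact hcop.mul_dvd haodd.1 h
      · right; push_cast; exact hcop.mul_dvd haodd.2 h
  rcases conclude with h | h
  · left
    have : ((a - 1 : ℤ) : ZMod m) = 0 := (ZMod.intCast_zmod_eq_zero_iff_dvd _ _).mpr h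
    push_cast at this
    rw [hax] at this
    linear_combination this
  · right
    have : ((a + 1 : ℤ) : ZMod m) = 0 := (ZMod.intCast_zmod_eq_zero_iff_dvd _ _).mpr h
    push_cast at this
    rw [hax] at this
    linear_combination this

/-- Let `q ≡ 3 (mod 4)` be prime, `r ≥ 1`, and `m = q^r` or `m = 2 q^r`. If a prime `p`
coprime to `m` is a quadratic non-residue modulo `q`, then `p` is self-conjugate modulo
`m`: its multiplicative order `f` modulo `m` is even and `p ^ (f / 2) ≡ -1 (mod m)`. -/
theorem stmt_9 (q : ℕ) (hq : q.Prime) (hq4 : q % 4 = 3) (r : ℕ) (hr : 1 ≤ r)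
    (m : ℕ) (hm : m = q ^ r ∨ m = 2 * q ^ r)
    (p : ℕ) (hp : p.Prime) (hpm : Nat.Coprime p m)
    (hqnr : ¬∃ x : ZMod q, x ^ 2 = (p : ZMod q)) :
    Even (orderOf (p : ZMod m)) ∧
      (p : ZMod m) ^ (orderOf (p : ZMod m) / 2) = -1 := by
  haveI : Fact q.Prime := ⟨hq⟩
  have hq2 : q ≠ 2 := by omega
  have hq3 : 3 ≤ q := by
    rcases hq.two_le.lt_or_eq with h | h
    · omega
    · omega
  have hm0 : m ≠ 0 := by rcases hm with rfl | rfl <;> positivity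
  haveI : NeZero m := ⟨hm0⟩
  have hqm : q ∣ m := by
    rcases hm with rfl | rfl
    · exact dvd_pow_self q (by omega)
    · exact dvd_mul_of_dvd_right (dvd_pow_self q (by omega)) 2
  -- order of p mod q is even
  have hpq0 : (p : ZMod q) ≠ 0 := by
    rw [Ne, ZMod.natCast_eq_zero_iff]
    intro h
    have : q ∣ Nat.gcd p m := Nat.dvd_gcd h hqm
    rw [hpm] at this
    have := Nat.le_of_dvd one_pos this
    omega
  have hns : ¬ IsSquare ((p : ZMod q)) := by
    rintro ⟨y, hy⟩
    exact hqnr ⟨y, by rw [hy]; ring⟩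
  have heuler : (p : ZMod q) ^ (q / 2) ≠ 1 := by
    intro h
    exact hns ((ZMod.euler_criterion q hpq0).mpr h)
  set e := orderOf ((p : ZMod q)) with he
  have hedvd : e ∣ q - 1 := by
    apply orderOf_dvd_of_pow_eq_one
    exact ZMod.pow_card_sub_one_eq_one hpq0
  have hene : ¬ e ∣ q / 2 := by
    intro h
    exact heuler (orderOf_dvd_iff_pow_eq_one.mp h)
  have heeven : Even e := by
    rw [Nat.even_iff]
    by_contra h
    have hcop : Nat.Coprime e 2 := by
      exact ((Nat.Prime.coprime_iff_not_dvd Nat.prime_two).mpr (by omega)).symm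
    apply hene
    have : e ∣ 2 * (q / 2) := by
      have : q - 1 = 2 * (q / 2) := by omega
      rwa [this] at hedvd
    exact hcop.dvd_of_dvd_mul_left this
  -- e divides f
  set f := orderOf ((p : ZMod m)) with hf
  have hedvdf : e ∣ f := by
    have : (ZMod.castHom hqm (ZMod q)) ((p : ZMod m)) = (p : ZMod q) := by
      simp
    rw [he, ← this]
    exact orderOf_map_dvd (ZMod.castHom hqm (ZMod q)).toMonoidHom _
  have hfeven : Even f := by
    rcases heeven with ⟨k, hk⟩
    rcases hedvdf with ⟨c, hc⟩
    exact ⟨k * c, by rw [hc, hk]; ring⟩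
  -- f > 0
  have hu : IsUnit ((p : ZMod m)) := by
    rw [ZMod.isUnit_iff_coprime]
    exact hpm
  have hfpos : 0 < f := by
    rcases hu with ⟨u, hu'⟩
    rw [hf, ← hu', orderOf_units]
    exact orderOf_pos u
  have hf2 : 2 ≤ f := by
    rcases hfeven with ⟨k, hk⟩
    omega
  -- x := p ^ (f/2)
  set x : ZMod m := (p : ZMod m) ^ (f / 2) with hx
  have hxsq : x ^ 2 = 1 := by
    rw [hx, ← pow_mul]
    have : f / 2 * 2 = f := by
      rcases hfeven with ⟨k, hk⟩; omega
    rw [this, hf]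
    exact pow_orderOf_eq_one _
  have hxne : x ≠ 1 := by
    intro h
    rw [hx] at h
    have : f ∣ f / 2 := by
      rw [hf]
      exact orderOf_dvd_iff_pow_eq_one.mpr h
    have := Nat.le_of_dvd (by omega) this
    omega
  refine ⟨hfeven, ?_⟩
  rcases sq_one_aux q r hq hq2 m hm x hxsq with h | h
  · exact absurd h hxne
  · exact h
end

section
/- Let p be a prime, f ≥ 1 an integer, γ ∈ ℤ, and v ≥ 2 an integer. If a near conference matrix C_γ(v, p^f) exists, then p divides v − 2 − γ. -/
open Matrix Polynomial


lemma key {p f : ℕ} (hp : p.Prime) (hf : 1 ≤ f) (γ : ℤ) {α : Type*} (S : Finset α)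
    (t : α → ℂ) (ht : ∀ k ∈ S, t k ^ (p ^ f) = 1) (hsum : ∑ k ∈ S, t k = (γ : ℂ)) :
    (p : ℤ) ∣ (S.card : ℤ) - γ := by
  have hne : (p ^ f : ℕ) ≠ 0 := pow_ne_zero f hp.pos.ne'
  set ζ : ℂ := Complex.exp (2 * Real.pi * Complex.I / (p ^ f : ℕ))
  haveI : NeZero (p ^ f) := ⟨hne⟩
  have hζ : IsPrimitiveRoot ζ (p ^ f) := Complex.isPrimitiveRoot_exp _ hne
  choose a ha1 ha2 using fun k (hk : k ∈ S) => hζ.eq_pow_of_pow_eq_one (ht k hk)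
  set Q : ℤ[X] := (∑ k ∈ S.attach, X ^ a k.1 k.2) - C γ with hQ
  have haev : aeval ζ Q = 0 := by
    simp only [hQ, map_sub, map_sum, map_pow, aeval_X, aeval_C]
    have hs : ∑ x ∈ S.attach, ζ ^ a x.1 x.2 = ∑ k ∈ S, t k := by
      rw [← Finset.sum_attach S t]
      exact Finset.sum_congr rfl fun k _ => ha2 k.1 k.2
    rw [hs, hsum]
    simp
  have hmin : minpoly ℤ ζ ∣ Q :=
    minpoly.isIntegrallyClosed_dvd (hζ.isIntegral (Nat.pos_of_ne_zero hne)) haev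
  rw [← Polynomial.cyclotomic_eq_minpoly hζ (Nat.pos_of_ne_zero hne)] at hmin
  have hev := Polynomial.eval_dvd (x := (1 : ℤ)) hmin
  obtain ⟨g, rfl⟩ := Nat.exists_eq_add_of_le hf
  haveI : Fact p.Prime := ⟨hp⟩
  rw [show 1 + g = g + 1 from add_comm 1 g, Polynomial.eval_one_cyclotomic_prime_pow] at hev
  simpa [hQ, eval_finset_sum] using hev


/-- If a near conference matrix `C_γ(v, p^f)` exists, then `p ∣ v - 2 - γ`. -/
theorem stmt_14 (p : ℕ) (hp : p.Prime) (f : ℕ) (hf : 1 ≤ f) (γ : ℤ) (v : ℕ) (hv : 2 ≤ v)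
    (h : ∃ C : Matrix (Fin v) (Fin v) ℂ, IsNearConf v (p ^ f) (γ : ℂ) C) :
    (p : ℤ) ∣ (v : ℤ) - 2 - γ := by
  obtain ⟨C, hdiag, hroot, heq⟩ := h
  set i : Fin v := ⟨0, by omega⟩
  set j : Fin v := ⟨1, by omega⟩
  have hij : i ≠ j := by simp [i, j, Fin.ext_iff]
  have hent := congrFun (congrFun heq i) j
  rw [Matrix.mul_apply] at hent
  simp only [Matrix.add_apply, Matrix.smul_apply, Matrix.one_apply_ne hij, Matrix.of_apply,
    smul_zero, zero_add, smul_eq_mul, mul_one, mul_zero, Matrix.conjTranspose_apply] at hent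
  set S : Finset (Fin v) := Finset.univ \ {i, j} with hS
  have hsum : ∑ k ∈ S, C i k * star (C j k) = (γ : ℂ) := by
    rw [← hent]
    refine (Finset.sum_subset (f := fun k => C i k * star (C j k)) (Finset.subset_univ S) ?_)
    intro k _ hk
    simp only [hS, Finset.mem_sdiff, Finset.mem_univ, true_and, not_not,
      Finset.mem_insert, Finset.mem_singleton] at hk
    rcases hk with rfl | rfl
    · simp [hdiag]
    · simp [hdiag]
  have ht : ∀ k ∈ S, (C i k * star (C j k)) ^ (p ^ f) = 1 := by
    intro k hk
    simp only [hS, Finset.mem_sdiff, Finset.mem_insert, Finset.mem_singleton, not_or] at hk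
    rw [mul_pow, ← star_pow, hroot i k (Ne.symm hk.2.1), hroot j k (Ne.symm hk.2.2)]
    simp
  have hcard : S.card = v - 2 := by
    rw [hS, Finset.card_sdiff_of_subset (Finset.subset_univ _), Finset.card_univ, Fintype.card_fin,
      Finset.card_insert_of_notMem (by simpa using hij), Finset.card_singleton]
  have := key hp hf γ S _ ht hsum
  rw [hcard] at this
  have h2 : ((v - 2 : ℕ) : ℤ) = (v : ℤ) - 2 := by omega
  rwa [h2] at this
end

section
/- There exists no α in ℤ[ζ_23], the ring of integers of the 23rd cyclotomic field ℚ(ζ_23), such that α·conj(α) = 2, where conj denotes complex conjugation. -/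
/-!
Write `α = f(ζ)` with `f ∈ ℤ[X]` of degree `< φ(23) = 22`. Since `α ᾱ = 2` is a rational integer,
it is Galois invariant, so `|f(ζ^k)|² = 2` for `k = 1, …, 22`, while `f(1) = s` is the sum of the
coefficients `a_i` of `f`. Parseval's identity for the discrete Fourier transform of length 23 then
gives `s² + 44 = 23 ∑ a_i²`, which has no integer solution.
-/

open Finset Polynomial ComplexConjugate

theorem exists_natDegree_lt_aeval_eq_of_mem_adjoin {R A : Type*} [CommRing R] [CommRing A]
    [Algebra R A] [Nontrivial A] {x : A} (hx : IsIntegral R x) {y : A}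
    (hy : y ∈ Algebra.adjoin R {x}) :
    ∃ f : R[X], f.natDegree < (minpoly R x).natDegree ∧ aeval x f = y := by
  obtain ⟨g, rfl⟩ := Algebra.adjoin_singleton_eq_range_aeval R x ▸ hy
  exact ⟨g %ₘ minpoly R x, natDegree_modByMonic_lt g (minpoly.monic hx) (minpoly.ne_one R x),
    minpoly.aeval_modByMonic_minpoly g x⟩

theorem Complex.conj_aeval_int (f : ℤ[X]) (z : ℂ) : conj (aeval z f) = aeval (conj z) f :=
  (aeval_algHom_apply (starRingEnd ℂ).toIntAlgHom z f).symm

theorem Complex.conj_eq_pow_sub_one_of_pow_eq_one {w : ℂ} {n : ℕ} (hw : w ^ n = 1) (hn : n ≠ 0) :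
    conj w = w ^ (n - 1) := by
  rw [← Complex.inv_eq_conj (Complex.norm_eq_one_of_pow_eq_one hw hn)]
  exact inv_eq_of_mul_eq_one_left (by rw [pow_sub_one_mul hn, hw])

namespace IsPrimitiveRoot

theorem aeval_pow_eq_zero_of_coprime {K : Type*} [CommRing K] [IsDomain K] [CharZero K] {n : ℕ}
    {μ : K} (hμ : IsPrimitiveRoot μ n) (hn : 0 < n) {P : ℤ[X]} (hP : aeval μ P = 0) {m : ℕ}
    (hm : m.Coprime n) : aeval (μ ^ m) P = 0 := by
  have hdvd : minpoly ℤ (μ ^ m) ∣ P := by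
    rw [← hμ.minpoly_eq_pow_coprime hm]
    exact minpoly.isIntegrallyClosed_dvd (hμ.isIntegral hn) hP
  exact aeval_eq_zero_of_dvd_aeval_eq_zero hdvd (minpoly.aeval ℤ _)

theorem sum_range_pow_zpow {K : Type*} [Field K] {n : ℕ} {μ : K} (hμ : IsPrimitiveRoot μ n)
    (j : ℤ) : ∑ k ∈ range n, (μ ^ j) ^ k = if (n : ℤ) ∣ j then (n : K) else 0 := by
  split_ifs with h
  · simp [(hμ.zpow_eq_one_iff_dvd j).mpr h]
  · have hne : μ ^ j - 1 ≠ 0 := sub_ne_zero.mpr (mt (hμ.zpow_eq_one_iff_dvd j).mp h)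
    have hpow : (μ ^ j) ^ n = 1 := by
      rw [← zpow_natCast, ← zpow_mul, mul_comm, zpow_mul, zpow_natCast, hμ.pow_eq_one, one_zpow]
    simpa [hpow, hne] using geom_sum_mul (μ ^ j) n

variable {ζ : ℂ} {n : ℕ}

theorem sum_norm_sq_sum_mul_pow (hζ : IsPrimitiveRoot ζ n) (a : ℕ → ℂ) :
    ∑ k ∈ range n, ‖∑ i ∈ range n, a i * (ζ ^ k) ^ i‖ ^ 2 = n * ∑ i ∈ range n, ‖a i‖ ^ 2 := by
  rcases n.eq_zero_or_pos with rfl | hn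
  · simp
  have hconj : conj ζ = ζ⁻¹ := (Complex.inv_eq_conj (hζ.norm'_eq_one hn.ne')).symm
  have hterm (i j k : ℕ) : (ζ ^ k) ^ i * conj ((ζ ^ k) ^ j) = (ζ ^ ((i : ℤ) - j)) ^ k := by
    rw [map_pow, map_pow, hconj, zpow_sub₀ (hζ.ne_zero hn.ne'), zpow_natCast, zpow_natCast]
    field_simp
    ring
  apply Complex.ofReal_injective
  push_cast
  simp_rw [← Complex.mul_conj', map_sum, map_mul, sum_mul_sum]
  calc ∑ k ∈ range n, ∑ i ∈ range n, ∑ j ∈ range n,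
        a i * (ζ ^ k) ^ i * (conj (a j) * conj ((ζ ^ k) ^ j))
      = ∑ i ∈ range n, ∑ j ∈ range n,
          a i * conj (a j) * ∑ k ∈ range n, (ζ ^ ((i : ℤ) - j)) ^ k := by
        rw [sum_comm]
        refine sum_congr rfl fun i _ => ?_
        rw [sum_comm]
        refine sum_congr rfl fun j _ => ?_
        rw [mul_sum]
        refine sum_congr rfl fun k _ => ?_
        rw [← hterm]
        ring
    _ = ∑ i ∈ range n, n * (a i * conj (a i)) := by
        refine sum_congr rfl fun i hi => ?_
        simp_rw [hζ.sum_range_pow_zpow]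
        rw [sum_eq_single_of_mem i hi]
        · rw [sub_self, if_pos (dvd_zero _)]
          ring
        · intro j hj hji
          simp only [mem_range] at hi hj
          rw [if_neg, mul_zero]
          intro hdvd
          have := Int.eq_zero_of_abs_lt_dvd hdvd (by rw [abs_lt]; omega)
          omega
    _ = _ := by rw [mul_sum]

theorem sum_norm_sq_aeval_pow (hζ : IsPrimitiveRoot ζ n) {f : ℤ[X]} (hf : f.natDegree < n) :
    ∑ k ∈ range n, ‖aeval (ζ ^ k) f‖ ^ 2 = n * ∑ i ∈ range n, (f.coeff i : ℝ) ^ 2 := by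
  simpa [aeval_eq_sum_range' hf] using hζ.sum_norm_sq_sum_mul_pow (fun i => (f.coeff i : ℂ))

theorem norm_sq_aeval_pow_of_coprime (hζ : IsPrimitiveRoot ζ n) (hn : 0 < n) {f : ℤ[X]} {c : ℤ}
    (hf : ‖aeval ζ f‖ ^ 2 = c) {m : ℕ} (hm : m.Coprime n) : ‖aeval (ζ ^ m) f‖ ^ 2 = c := by
  -- `conj w = w ^ (n - 1)` makes `|f(w)|² - c` the value at `w` of an integer polynomial.
  set P : ℤ[X] := f * f.comp (X ^ (n - 1)) - C c
  have hnorm : ∀ w : ℂ, w ^ n = 1 → aeval w P = ‖aeval w f‖ ^ 2 - c := by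
    intro w hw
    rw [← Complex.mul_conj', Complex.conj_aeval_int,
      Complex.conj_eq_pow_sub_one_of_pow_eq_one hw hn.ne']
    simp [P, aeval_comp]
  have hP : aeval (ζ ^ m) P = 0 :=
    hζ.aeval_pow_eq_zero_of_coprime hn
      (by rw [hnorm ζ hζ.pow_eq_one, sub_eq_zero]; exact_mod_cast hf) hm
  rw [hnorm _ (hζ.pow_of_coprime m hm).pow_eq_one, sub_eq_zero] at hP
  exact_mod_cast hP

end IsPrimitiveRoot

theorem sq_sum_add_ne_mul_sum_sq (a : ℕ → ℤ) :
    (∑ i ∈ range 22, a i) ^ 2 + 44 ≠ 23 * ∑ i ∈ range 22, a i ^ 2 := by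
  set s := ∑ i ∈ range 22, a i
  set Q := ∑ i ∈ range 22, a i ^ 2
  intro h
  -- Cauchy–Schwarz gives `Q ≤ 44`; the remaining `|s| ≤ 31` with `s² ≡ 2 (mod 23)` are
  -- `5, 18, 28`, excluded by `|s| ≤ Q` and `3 |s| ≤ Q + 44`.
  have hCS : s ^ 2 ≤ 22 * Q := by simpa using sq_sum_le_card_mul_sum_sq (s := range 22) (f := a)
  have hsum_abs : |s| ≤ ∑ i ∈ range 22, |a i| := abs_sum_le_sum_abs _ _
  have hQ : ∑ i ∈ range 22, |a i| ≤ Q := sum_le_sum fun i _ => by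
    simpa using Int.natAbs_le_self_sq (a i)
  have hQ3 : 3 * ∑ i ∈ range 22, |a i| ≤ Q + 44 := by
    have (x : ℤ) : 3 * |x| ≤ x ^ 2 + 2 := by
      rcases le_or_gt |x| 1 with hx | hx <;> nlinarith [sq_abs x, abs_nonneg x]
    simpa [mul_sum, sum_add_distrib] using sum_le_sum fun i (_ : i ∈ range 22) => this (a i)
  have ht : |s| ^ 2 + 44 = 23 * Q := by rwa [sq_abs]
  have hbound : |s| ≤ 31 := by nlinarith [abs_nonneg s]
  have hnonneg := abs_nonneg s
  interval_cases |s| <;> omega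

/-- There is no `α` in `ℤ[ζ₂₃]`, the ring of integers of the 23rd cyclotomic field
(viewed inside `ℂ` as `Algebra.adjoin ℤ {ζ₂₃}` with `ζ₂₃ = exp(2πi/23)`),
with `α * conj α = 2`. -/
theorem stmt_15 :
    ¬∃ α : ℂ, α ∈ Algebra.adjoin ℤ {Complex.exp (2 * Real.pi * Complex.I / 23)} ∧
      α * (starRingEnd ℂ) α = 2 := by
  set ζ : ℂ := Complex.exp (2 * Real.pi * Complex.I / 23)
  rintro ⟨α, hα, hnorm⟩
  have hζ : IsPrimitiveRoot ζ 23 := by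
    simpa [ζ] using Complex.isPrimitiveRoot_exp 23 (by norm_num)
  obtain ⟨f, hdeg, rfl⟩ :=
    exists_natDegree_lt_aeval_eq_of_mem_adjoin (hζ.isIntegral (by norm_num)) hα
  rw [← cyclotomic_eq_minpoly hζ (by norm_num), natDegree_cyclotomic,
    Nat.totient_prime (by norm_num)] at hdeg
  have hgalois (k : ℕ) (hk : k ∈ range 22) : ‖aeval (ζ ^ (k + 1)) f‖ ^ 2 = ((2 : ℤ) : ℝ) := by
    refine hζ.norm_sq_aeval_pow_of_coprime (by norm_num) ?_ ?_
    · rw [Complex.mul_conj'] at hnorm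
      exact_mod_cast hnorm
    · rw [mem_range] at hk
      exact ((Nat.Prime.coprime_iff_not_dvd (by norm_num)).mpr (by omega)).symm
  have hparseval := hζ.sum_norm_sq_aeval_pow (hdeg.trans (by norm_num))
  have hone : ‖aeval (ζ ^ 0) f‖ ^ 2 = (((∑ i ∈ range 22, f.coeff i) ^ 2 : ℤ) : ℝ) := by
    have : aeval (ζ ^ 0) f = ((∑ i ∈ range 22, f.coeff i : ℤ) : ℂ) := by
      simp [aeval_eq_sum_range' hdeg]
    rw [this, Complex.norm_intCast, sq_abs, Int.cast_pow]
  rw [sum_range_succ', sum_congr rfl hgalois, hone, sum_range_succ _ 22,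
    coeff_eq_zero_of_natDegree_lt hdeg] at hparseval
  refine sq_sum_add_ne_mul_sum_sq f.coeff (Int.cast_injective (α := ℝ) ?_)
  norm_num at hparseval ⊢
  linarith
end

section
/- There exists no 31-ary nearly perfect sequence of period 32 and type γ = 1; that is, there is no function a : ℤ/32ℤ → ℂ taking all its values in the set of complex 31st roots of unity such that for every t ∈ ℤ/32ℤ with t ≠ 0 the autocorrelation C_a(t) = Σ_{i ∈ ℤ/32ℤ} a(i)·conj(a(i+t)) equals 1. -/
/-!
Write `a i = ζ ^ b i` for a primitive 31st root of unity `ζ`, and let `m v` count the `i` with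
`b i = v`. Summing all autocorrelations of `a` gives `|∑ a i|² = 32 + 31 = 63`, and expanding
`|∑ m v ζ ^ v|²` turns this into `∑ s, C(s) ζ ^ s = 63`, where `C` is the periodic
autocorrelation of `m`. As `1, ζ, …, ζ ^ 29` are linearly independent over `ℚ`, this
forces `C(s) = 31` for `s ≠ 0` and `C(0) = 94`; in particular `C ≡ 1 (mod 3)`, and then
`m + 1` has vanishing autocorrelation modulo 3.

In `(ZMod 3)[ZMod 31]` the Frobenius power `x ↦ x ^ 3 ^ 15` sends `x = ∑ r v • [v]` to its
reversal `∑ r v • [-v]`, because `3 ^ 15 ≡ -1 (mod 31)`. Vanishing autocorrelation of `r`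
means `x * x ^ 3 ^ 15 = 0`, and `x ^ 3 ^ 30 = x`, so `x = 0`. Hence every `m v ≡ 2 (mod 3)`,
so `m v ≥ 2` and `∑ m v ≥ 62 > 32`.
-/

open Finset

section Autocorrelation

variable {G R : Type*} [AddCommGroup G] [Fintype G] [CommSemiring R]

def autocorr (f : G → R) (s : G) : R := ∑ w, f (w + s) * f w

lemma sum_autocorr (f : G → R) : ∑ s, autocorr f s = (∑ v, f v) ^ 2 := by
  simp only [autocorr, sq, sum_mul_sum]
  rw [sum_comm]
  refine sum_congr rfl fun w _ => ?_
  rw [← sum_mul, ← mul_sum, mul_comm]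
  congr 1
  exact Equiv.sum_comp (Equiv.addLeft w) f

lemma autocorr_map {S : Type*} [CommSemiring S] (φ : R →+* S) (f : G → R) (s : G) :
    autocorr (fun v => φ (f v)) s = φ (autocorr f s) := by
  simp only [autocorr, map_sum, map_mul]

lemma autocorr_add_const (f : G → R) (c : R) (s : G) :
    autocorr (fun v => f v + c) s =
      autocorr f s + 2 * c * ∑ v, f v + Fintype.card G * c ^ 2 := by
  have hshift : ∑ w, f (w + s) = ∑ v, f v := Equiv.sum_comp (Equiv.addRight s) f
  simp only [autocorr, add_mul, mul_add, sum_add_distrib, ← sum_mul, ← mul_sum, hshift,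
    sum_const, card_univ, nsmul_eq_mul]
  ring

end Autocorrelation

section GroupAlgebra

open AddMonoidAlgebra

variable {G : Type*} [AddCommGroup G] [Fintype G]

lemma sum_single_mul_sum_single_neg {R : Type*} [CommSemiring R] (f : G → R) :
    ((∑ v, single v (f v)) * ∑ w, single (-w) (f w) : AddMonoidAlgebra R G) =
      ∑ s, single s (autocorr f s) := by
  simp only [sum_mul_sum, single_mul_single, autocorr]
  rw [sum_comm]
  have hshift : ∀ w, ∑ v, single (v + -w) (f v * f w) =
      ∑ s, (single s (f (w + s) * f w) : AddMonoidAlgebra R G) := fun w =>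
    Fintype.sum_equiv (Equiv.addLeft (-w)) _ _ fun v => by simp [add_comm]
  simp only [hshift]
  rw [sum_comm]
  exact sum_congr rfl fun s _ => (map_sum (singleAddHom s) _ _).symm

variable {p : ℕ} [Fact p.Prime]

lemma sum_single_pow_prime_pow (r : G → ZMod p) (j : ℕ) :
    (∑ v, single v (r v) : AddMonoidAlgebra (ZMod p) G) ^ p ^ j =
      ∑ v, single (p ^ j • v) (r v) := by
  have : CharP (AddMonoidAlgebra (ZMod p) G) p := charP_of_injective_algebraMap' (ZMod p) p
  simp only [sum_pow_char_pow, single_pow, ZMod.pow_card_pow]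

theorem eq_zero_of_autocorr_eq_zero {k : ℕ} (hk : 0 < k) (hpk : ∀ v : G, p ^ k • v = -v)
    (r : G → ZMod p) (hr : ∀ s, autocorr r s = 0) : r = 0 := by
  set x : AddMonoidAlgebra (ZMod p) G := ∑ v, single v (r v)
  have hconj : x ^ p ^ k = ∑ v, single (-v) (r v) := by
    simp only [x, sum_single_pow_prime_pow, hpk]
  have hnil : x ^ (p ^ k + 1) = 0 := by
    rw [pow_succ', hconj, sum_single_mul_sum_single_neg]
    simp only [hr, single_zero, sum_const_zero]
  have hperiodic : x ^ p ^ (2 * k) = x := by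
    rw [sum_single_pow_prime_pow]
    simp only [two_mul, pow_add, mul_smul, hpk, neg_neg, x]
  have hle : p ^ k + 1 ≤ p ^ (2 * k) := by
    have := Nat.one_lt_pow hk.ne' (Fact.out : p.Prime).one_lt
    rw [two_mul, pow_add]
    nlinarith
  have hx : x = 0 := by
    rw [← hperiodic, ← Nat.add_sub_cancel' hle, pow_add, hnil, zero_mul]
  have hcoeff := congrArg coeff hx
  simp only [x, coeff_sum, coeff_single, coeff_zero] at hcoeff
  rw [← Finsupp.coe_univ_sum_single r, hcoeff, Finsupp.coe_zero]

end GroupAlgebra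

open ComplexConjugate

section Energy

variable {G : Type*} [AddCommGroup G] [Fintype G]

lemma sum_autocorrelation_eq_mul_conj (a : G → ℂ) :
    ∑ t, ∑ i, a i * conj (a (i + t)) = (∑ i, a i) * conj (∑ i, a i) := by
  rw [sum_comm, sum_mul]
  refine sum_congr rfl fun i _ => ?_
  rw [← mul_sum, map_sum]
  congr 1
  exact Equiv.sum_comp (Equiv.addLeft i) (fun j => conj (a j))

lemma mul_conj_sum_eq_of_autocorrelation_eq {a : G → ℂ} (ha : ∀ i, ‖a i‖ = 1) {γ : ℂ}
    (hγ : ∀ t ≠ 0, ∑ i, a i * conj (a (i + t)) = γ) :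
    (∑ i, a i) * conj (∑ i, a i) = Fintype.card G + (Fintype.card G - 1) * γ := by
  classical
  have hpeak : ∑ i, a i * conj (a (i + 0)) = Fintype.card G := by
    simp [Complex.mul_conj, Complex.normSq_eq_norm_sq, ha]
  rw [← sum_autocorrelation_eq_mul_conj, ← add_sum_erase _ _ (mem_univ 0), hpeak,
    sum_congr rfl fun t ht => hγ t (ne_of_mem_erase ht), sum_const,
    card_erase_of_mem (mem_univ 0), card_univ, nsmul_eq_mul,
    Nat.cast_sub Fintype.card_pos, Nat.cast_one]

lemma sum_intCast_mul_addChar_mul_conj (ψ : AddChar G ℂ) (m : G → ℤ) :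
    (∑ v, (m v : ℂ) * ψ v) * conj (∑ v, (m v : ℂ) * ψ v) =
      ∑ s, ((autocorr m s : ℤ) : ℂ) * ψ s := by
  simp only [map_sum, map_mul, map_intCast, ← AddChar.map_neg_eq_conj, sum_mul_sum]
  rw [sum_comm]
  have hshift : ∀ w, ∑ v, (m v : ℂ) * ψ v * ((m w : ℂ) * ψ (-w)) =
      ∑ s, ((m (w + s) * m w : ℤ) : ℂ) * ψ s := fun w =>
    Fintype.sum_equiv (Equiv.addLeft (-w)) _ _ fun v => by
      simp only [Equiv.coe_addLeft, add_neg_cancel_left, Int.cast_mul, AddChar.map_add_eq_mul]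
      ring
  simp only [hshift]
  rw [sum_comm]
  simp only [autocorr, Int.cast_sum, sum_mul]

lemma sum_addChar_comp_eq_sum_card_mul {ι : Type*} [Fintype ι] [DecidableEq G]
    (ψ : AddChar G ℂ) (b : ι → G) :
    ∑ i, ψ (b i) = ∑ v, ((#{i | b i = v} : ℤ) : ℂ) * ψ v := by
  rw [← sum_fiberwise univ b (fun i => ψ (b i))]
  refine sum_congr rfl fun v _ => ?_
  rw [sum_congr rfl fun i hi => by rw [(mem_filter.mp hi).2], sum_const, nsmul_eq_mul]
  norm_cast

end Energy

theorem IsPrimitiveRoot.eq_of_sum_intCast_mul_pow_val_eq_zero {K : Type*} [Field K]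
    [CharZero K] {p : ℕ} [hp : Fact p.Prime] {ζ : K} (hζ : IsPrimitiveRoot ζ p)
    {c : ZMod p → ℤ} (h : ∑ s, (c s : K) * ζ ^ s.val = 0) (s t : ZMod p) : c s = c t := by
  obtain ⟨n, rfl⟩ : ∃ n, p = n + 1 := Nat.exists_eq_succ_of_ne_zero hp.out.ne_zero
  -- `ZMod (n + 1)` is `Fin (n + 1)` by definition, and `ZMod.val` is `Fin.val`.
  change ∑ s : Fin (n + 1), (c s : K) * ζ ^ (s : ℕ) = 0 at h
  have hdeg : (minpoly ℚ ζ).natDegree = n := by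
    rw [← Polynomial.cyclotomic_eq_minpoly_rat hζ n.succ_pos, Polynomial.natDegree_cyclotomic,
      Nat.totient_prime hp.out, Nat.add_sub_cancel]
  have hli : LinearIndependent ℚ fun k : Fin n => ζ ^ (k : ℕ) :=
    hdeg ▸ linearIndependent_pow ζ
  have hgeom : ∑ k : Fin (n + 1), ζ ^ (k : ℕ) = 0 := by
    rw [Fin.sum_univ_eq_sum_range (ζ ^ ·)]
    exact hζ.geom_sum_eq_zero (by have := hp.out.one_lt; omega)
  have hlast : ∀ k : Fin n, c k.castSucc = c (Fin.last n) := by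
    have hsum :
        ∑ k : Fin n, ((c k.castSucc - c (Fin.last n) : ℤ) : ℚ) • ζ ^ (k : ℕ) = 0 := by
      have : ∑ k : Fin (n + 1), ((c k - c (Fin.last n) : ℤ) : K) * ζ ^ (k : ℕ) = 0 := by
        simp only [Int.cast_sub, sub_mul, sum_sub_distrib, h, ← mul_sum, hgeom, mul_zero,
          sub_zero]
      rw [Fin.sum_univ_castSucc] at this
      simpa [Rat.smul_def] using this
    intro k
    exact sub_eq_zero.mp <| Int.cast_eq_zero.mp <| Fintype.linearIndependent_iff.mp hli _ hsum k
  have hall : ∀ s : Fin (n + 1), c s = c (Fin.last n) := fun s => Fin.lastCases rfl hlast s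
  exact (hall s).trans (hall t).symm

theorem IsPrimitiveRoot.autocorr_eq_of_sum_autocorr_mul_pow_val_eq {K : Type*} [Field K]
    [CharZero K] {p : ℕ} [Fact p.Prime] {ζ : K} (hζ : IsPrimitiveRoot ζ p) (m : ZMod p → ℤ)
    {N : ℤ} (h : ∑ s : ZMod p, ((autocorr m s : ℤ) : K) * ζ ^ s.val = N) (s : ZMod p) :
    p * autocorr m s + N = (∑ v, m v) ^ 2 + if s = 0 then p * N else 0 := by
  set c : ZMod p → ℤ := fun t => autocorr m t - if t = 0 then N else 0
  have hc : ∑ t, (c t : K) * ζ ^ t.val = 0 := by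
    simp [c, sub_mul, sum_sub_distrib, h]
  have hsum : (∑ v, m v) ^ 2 - N = p * c s := by
    rw [← sum_autocorr]
    calc ∑ t, autocorr m t - N = ∑ t, c t := by simp [c, sum_sub_distrib]
      _ = ∑ _t : ZMod p, c s :=
        sum_congr rfl fun t _ => hζ.eq_of_sum_intCast_mul_pow_val_eq_zero hc t s
      _ = p * c s := by simp
  simp only [c] at hsum
  split_ifs at hsum ⊢ <;> linarith

theorem AddChar.exists_zmodChar_eq {K : Type*} [CommRing K] [IsDomain K] {n : ℕ} [NeZero n]
    {ζ : K} (hζ : IsPrimitiveRoot ζ n) {x : K} (hx : x ^ n = 1) :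
    ∃ v, AddChar.zmodChar n hζ.pow_eq_one v = x := by
  obtain ⟨k, -, rfl⟩ := hζ.eq_pow_of_pow_eq_one hx
  exact ⟨k, AddChar.zmodChar_apply' _ k⟩

lemma exists_neg_of_autocorr_intCast_eq_one (m : ZMod 31 → ℤ) (hsum : ∑ v, m v = 32)
    (hC : ∀ s, ((autocorr m s : ℤ) : ZMod 3) = 1) : ∃ v, m v < 0 := by
  set r : ZMod 31 → ZMod 3 := fun v => (m v : ZMod 3) + 1
  have hr : ∀ s, autocorr r s = 0 := by
    intro s
    have hcast := autocorr_map (Int.castRingHom (ZMod 3)) m s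
    have hsum3 : ∑ v, (m v : ZMod 3) = 2 := by
      rw [← Int.cast_sum, hsum]; decide
    simp only [eq_intCast] at hcast
    simp only [r, autocorr_add_const, hcast, hC, hsum3, ZMod.card]
    decide
  have hfrob : ∀ v : ZMod 31, 3 ^ 15 • v = -v := fun v => by
    rw [nsmul_eq_mul, show ((3 ^ 15 : ℕ) : ZMod 31) = -1 by decide, neg_one_mul]
  have hr0 := eq_zero_of_autocorr_eq_zero (by norm_num) hfrob r hr
  by_contra! hnonneg
  have htwo : ∀ v, 2 ≤ m v := fun v => by
    have hv : ((m v + 1 : ℤ) : ZMod 3) = 0 := by push_cast; exact congrFun hr0 v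
    have hdvd := (ZMod.intCast_zmod_eq_zero_iff_dvd _ 3).mp hv
    have hv0 := hnonneg v
    omega
  have := sum_le_sum fun v (_ : v ∈ univ) => htwo v
  simp [hsum, ZMod.card] at this

/-- There is no 31-ary nearly perfect sequence of period 32 and type `γ = 1`:
no `a : ℤ/32ℤ → ℂ` with all values 31st roots of unity whose autocorrelation
`C_a(t) = ∑ i, a i * conj (a (i + t))` equals `1` for every `t ≠ 0`. -/
theorem stmt_19 :
    ¬∃ a : ZMod 32 → ℂ, (∀ i, a i ^ 31 = 1) ∧
      ∀ t : ZMod 32, t ≠ 0 → ∑ i : ZMod 32, a i * (starRingEnd ℂ) (a (i + t)) = 1 := by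
  rintro ⟨a, ha, hC⟩
  have : Fact (Nat.Prime 31) := ⟨by norm_num⟩
  have hζ : IsPrimitiveRoot (Complex.exp (2 * Real.pi * Complex.I / 31)) 31 :=
    Complex.isPrimitiveRoot_exp 31 (by norm_num)
  choose b hb using fun i => AddChar.exists_zmodChar_eq hζ (ha i)
  set m : ZMod 31 → ℤ := fun v => #{i | b i = v}
  have hsum : ∑ v, m v = 32 := by
    simp only [m]
    rw [← Nat.cast_sum, ← card_eq_sum_card_fiberwise (fun i _ => mem_univ (b i))]
    simp
  set ψ := AddChar.zmodChar 31 hζ.pow_eq_one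
  have henergy : ∑ s, ((autocorr m s : ℤ) : ℂ) * ψ s = (63 : ℤ) := by
    rw [← sum_intCast_mul_addChar_mul_conj, ← sum_addChar_comp_eq_sum_card_mul]
    simp only [hb]
    have hnorm i : ‖a i‖ = 1 := Complex.norm_eq_one_of_pow_eq_one (ha i) (by norm_num)
    rw [mul_conj_sum_eq_of_autocorrelation_eq hnorm hC]
    norm_num [ZMod.card]
  obtain ⟨v, hv⟩ := exists_neg_of_autocorr_intCast_eq_one m hsum fun s => by
    have hcorr := hζ.autocorr_eq_of_sum_autocorr_mul_pow_val_eq m henergy s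
    rw [hsum] at hcorr
    split_ifs at hcorr
    · rw [show autocorr m s = 94 by omega]; decide
    · rw [show autocorr m s = 31 by omega]; decide
  exact hv.not_ge (Nat.cast_nonneg _)
end
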